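/- Let T be a left continuous t-norm and L a right continuous L-operation. Then (L⊗T)(f,g) is a continuous d.d.f. for every non-defective d.d.f. f and every continuous d.d.f. g if and only if T is continuous and L satisfies the cancellation law: L(x,y) = L(x,z) implies x = ∞ or y = z. -/

import Mathlib

open ENNReal Set

/-- A distance distribution function: increasing `f : [0,∞] → [0,1]` with
`f 0 = 0`, `f ∞ = 1`, left continuous on `(0,∞)`. -/
def IsDDF (f : ℝ≥0∞ → ℝ≥0∞) : Prop :=
  Monotone f ∧ (∀ x, f x ≤ 1) ∧ f 0 = 0 ∧ f ⊤ = 1 ∧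
    ∀ x : ℝ≥0∞, 0 < x → x < ⊤ → f x = ⨆ y ∈ Set.Iio x, f y

/-- The largest quasi-inverse `f∨ y = inf {x | f x > y}`. -/
noncomputable def qInv (f : ℝ≥0∞ → ℝ≥0∞) : ℝ≥0∞ → ℝ≥0∞ :=
  fun y => sInf {x | y < f x}

/-- The unit interval `[0,1]` inside `[0,∞]`. -/
def I01 : Set ℝ≥0∞ := Set.Icc 0 1

/-- A left continuous t-norm on `[0,1]`: commutative, associative, increasing in each
place, identity `1`, left continuous in each variable. -/
def IsLeftContTNorm (T : ℝ≥0∞ → ℝ≥0∞ → ℝ≥0∞) : Prop :=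
  (∀ p ∈ I01, ∀ q ∈ I01, T p q ∈ I01) ∧
  (∀ p ∈ I01, ∀ q ∈ I01, T p q = T q p) ∧
  (∀ p ∈ I01, ∀ q ∈ I01, ∀ r ∈ I01, T (T p q) r = T p (T q r)) ∧
  (∀ p ∈ I01, T p 1 = p) ∧
  (∀ q ∈ I01, ∀ p₁ ∈ I01, ∀ p₂ ∈ I01, p₁ ≤ p₂ → T p₁ q ≤ T p₂ q) ∧
  (∀ q ∈ I01, ∀ p ∈ I01, 0 < p → T p q = ⨆ p' ∈ Set.Iio p, T p' q)

/-- A right continuous `L`-operation on `[0,∞]`: commutative, associative, increasing in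
each place, identity `0`, right continuous in each variable. -/
def IsRightContLOp (L : ℝ≥0∞ → ℝ≥0∞ → ℝ≥0∞) : Prop :=
  (∀ x y, L x y = L y x) ∧
  (∀ x y z, L (L x y) z = L x (L y z)) ∧
  (∀ x, L x 0 = x) ∧
  (∀ y x₁ x₂, x₁ ≤ x₂ → L x₁ y ≤ L x₂ y) ∧
  (∀ y x, x < ⊤ → L x y = ⨅ x' ∈ Set.Ioi x, L x' y)

/-- Joint continuity of a t-norm on `[0,1] × [0,1]`. -/
def TNormContinuous (T : ℝ≥0∞ → ℝ≥0∞ → ℝ≥0∞) : Prop :=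
  ContinuousOn (fun pq : ℝ≥0∞ × ℝ≥0∞ => T pq.1 pq.2) (I01 ×ˢ I01)

/-- The tensor-product triangle function:
`(L ⊗ T)(f,g)(x) = sup {T (f r) (g s) | L r s < x}` for `x < ∞`, and `1` at `∞`. -/
noncomputable def tensor (L T : ℝ≥0∞ → ℝ≥0∞ → ℝ≥0∞) (f g : ℝ≥0∞ → ℝ≥0∞) :
    ℝ≥0∞ → ℝ≥0∞ :=
  fun x => if x = ⊤ then 1 else ⨆ r, ⨆ s, ⨆ _ : L r s < x, T (f r) (g s)

/-- A d.d.f. is non-defective if `sup_{x<∞} f x = 1`. -/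
def NonDefective (f : ℝ≥0∞ → ℝ≥0∞) : Prop :=
  (⨆ x ∈ Set.Iio (⊤ : ℝ≥0∞), f x) = 1


open Filter Topology

/-!
Sufficiency. The tensor is always a d.d.f., and its left continuity is automatic except at `∞`,
where non-defectiveness of `f` and continuity of `g` suffice because cancellation keeps `L r s`
finite for finite `r, s`. For right continuity at `x₀ < ∞`, pairs `(r, s)` with `L r s < x` and
`T (f r) (g s) > t` for `x ↓ x₀` accumulate along an ultrafilter at some `(r₀, s₀)`; continuity of
`T` and `g` passes the bound `t` to the limit. Cancellation makes `L r₀ ·` strictly increasing,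
so the weak bounds `L r₀ s' ≤ x₀` obtained in the limit become strict for `s' < s₀`, and right
continuity of `L` then produces pairs admissible for `x₀` itself. Whether `r₀` is approached from
the right or from the left decides whether the right limit of `f` at `r₀` or `f r₀` itself (via
left continuity of `f`) is used.

Necessity. If `L a y = L a z` with `a < ∞` and `y < z`, then for `f = 1_(a,∞]` and the continuous
strictly increasing `g s = 1 - (1 + s)⁻¹` the tensor jumps at `L a y` from at most `g y` to at
least `g z`. If `T p ·` were not right continuous at `q = g σ`, the tensor of `g` with the `f`
equal to `p` on `(0, σ+1]` and to `1` beyond would jump at `σ`. Right continuity of `T` in each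
argument, together with its left continuity and monotonicity, gives joint continuity.
-/

namespace IsLeftContTNorm

variable {T : ℝ≥0∞ → ℝ≥0∞ → ℝ≥0∞} {a p q p₁ p₂ q₁ q₂ : ℝ≥0∞}

theorem comm (hT : IsLeftContTNorm T) (hp : p ≤ 1) (hq : q ≤ 1) : T p q = T q p :=
  hT.2.1 p ⟨zero_le, hp⟩ q ⟨zero_le, hq⟩

theorem one_right (hT : IsLeftContTNorm T) (hp : p ≤ 1) : T p 1 = p :=
  hT.2.2.2.1 p ⟨zero_le, hp⟩

theorem one_left (hT : IsLeftContTNorm T) (hq : q ≤ 1) : T 1 q = q := by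
  rw [hT.comm le_rfl hq, hT.one_right hq]

theorem le_one (hT : IsLeftContTNorm T) (hp : p ≤ 1) (hq : q ≤ 1) : T p q ≤ 1 :=
  (hT.1 p ⟨zero_le, hp⟩ q ⟨zero_le, hq⟩).2

theorem mono_left (hT : IsLeftContTNorm T) (hq : q ≤ 1) (hp₂ : p₂ ≤ 1) (h : p₁ ≤ p₂) :
    T p₁ q ≤ T p₂ q :=
  hT.2.2.2.2.1 q ⟨zero_le, hq⟩ p₁ ⟨zero_le, h.trans hp₂⟩ p₂ ⟨zero_le, hp₂⟩ h

theorem mono_right (hT : IsLeftContTNorm T) (hp : p ≤ 1) (hq₂ : q₂ ≤ 1) (h : q₁ ≤ q₂) :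
    T p q₁ ≤ T p q₂ := by
  rw [hT.comm hp (h.trans hq₂), hT.comm hp hq₂]
  exact hT.mono_left hp hq₂ h

theorem mono (hT : IsLeftContTNorm T) (hp₂ : p₂ ≤ 1) (hq₂ : q₂ ≤ 1) (hp : p₁ ≤ p₂)
    (hq : q₁ ≤ q₂) : T p₁ q₁ ≤ T p₂ q₂ :=
  (hT.mono_left (hq.trans hq₂) hp₂ hp).trans (hT.mono_right hp₂ hq₂ hq)

theorem zero_left (hT : IsLeftContTNorm T) (hq : q ≤ 1) : T 0 q = 0 :=
  le_zero_iff.1 ((hT.mono_right zero_le le_rfl hq).trans (hT.one_right zero_le).le)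

theorem exists_lt_left (hT : IsLeftContTNorm T) (hp : p ≤ 1) (hq : q ≤ 1) (h : a < T p q) :
    ∃ p' < p, a < T p' q := by
  rcases eq_zero_or_pos p with rfl | hp0
  · rw [hT.zero_left hq] at h
    exact absurd h ENNReal.not_lt_zero
  · rw [hT.2.2.2.2.2 q ⟨zero_le, hq⟩ p ⟨zero_le, hp⟩ hp0] at h
    exact lt_biSup_iff.1 h

theorem exists_lt_right (hT : IsLeftContTNorm T) (hp : p ≤ 1) (hq : q ≤ 1) (h : a < T p q) :
    ∃ q' < q, a < T p q' := by
  rw [hT.comm hp hq] at h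
  obtain ⟨q', hq', h⟩ := hT.exists_lt_left hq hp h
  exact ⟨q', hq', by rwa [hT.comm hp (hq'.le.trans hq)]⟩

end IsLeftContTNorm

namespace IsRightContLOp

variable {L : ℝ≥0∞ → ℝ≥0∞ → ℝ≥0∞} {a b c x y x₁ x₂ y₁ y₂ : ℝ≥0∞}

theorem zero_right (hL : IsRightContLOp L) (x : ℝ≥0∞) : L x 0 = x := hL.2.2.1 x

theorem zero_left (hL : IsRightContLOp L) (y : ℝ≥0∞) : L 0 y = y := by
  rw [hL.1, hL.zero_right]

theorem mono_left (hL : IsRightContLOp L) (y : ℝ≥0∞) (h : x₁ ≤ x₂) : L x₁ y ≤ L x₂ y :=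
  hL.2.2.2.1 y x₁ x₂ h

theorem mono_right (hL : IsRightContLOp L) (x : ℝ≥0∞) (h : y₁ ≤ y₂) : L x y₁ ≤ L x y₂ := by
  rw [hL.1 x y₁, hL.1 x y₂]
  exact hL.mono_left x h

theorem mono (hL : IsRightContLOp L) (hx : x₁ ≤ x₂) (hy : y₁ ≤ y₂) : L x₁ y₁ ≤ L x₂ y₂ :=
  (hL.mono_left y₁ hx).trans (hL.mono_right x₂ hy)

theorem le_left (hL : IsRightContLOp L) (x y : ℝ≥0∞) : x ≤ L x y := by
  simpa only [hL.zero_right] using hL.mono_right x (zero_le : 0 ≤ y)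

theorem le_right (hL : IsRightContLOp L) (x y : ℝ≥0∞) : y ≤ L x y := hL.1 y x ▸ hL.le_left y x

theorem exists_gt_left (hL : IsRightContLOp L) (hx : x ≠ ⊤) (h : L x y < c) :
    ∃ x' > x, L x' y < c := by
  rw [hL.2.2.2.2 y x (lt_top_iff_ne_top.2 hx)] at h
  exact lt_biInf_iff.1 h

theorem le_of_eventually {l : Filter ℝ≥0∞} [l.NeBot] (hL : IsRightContLOp L) {r s : ℝ≥0∞ → ℝ≥0∞}
    (hl : l ≤ 𝓝 x) (hrs : ∀ᶠ x' in l, L (r x') (s x') < x')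
    (hab : ∀ᶠ x' in l, a ≤ r x' ∧ b ≤ s x') : L a b ≤ x :=
  le_of_forall_gt fun c hc => by
    have hxc : ∀ᶠ x' in l, x' < c := hl (Iio_mem_nhds hc)
    obtain ⟨x', hx'c, hrs, ha, hb⟩ := (hxc.and (hrs.and hab)).exists
    exact (hL.mono ha hb).trans_lt (hrs.trans hx'c)

end IsRightContLOp

def IsCancellative (L : ℝ≥0∞ → ℝ≥0∞ → ℝ≥0∞) : Prop :=
  ∀ x y z : ℝ≥0∞, L x y = L x z → x = ⊤ ∨ y = z

namespace IsCancellative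

variable {L : ℝ≥0∞ → ℝ≥0∞ → ℝ≥0∞} {a b b' x y x₀ : ℝ≥0∞}

theorem strictMono (hc : IsCancellative L) (hL : IsRightContLOp L) (hx : x ≠ ⊤) :
    StrictMono (L x) := fun y z h =>
  (hL.mono_right x h.le).lt_of_ne fun e => (hc x y z e).elim hx h.ne

theorem lt_top (hc : IsCancellative L) (hL : IsRightContLOp L) (hx : x ≠ ⊤) (hy : y ≠ ⊤) :
    L x y < ⊤ :=
  (hc.strictMono hL hx (ENNReal.lt_add_right hy one_ne_zero)).trans_le le_top

theorem lt_of_forall_lt_le (hc : IsCancellative L) (hL : IsRightContLOp L) (ha : a ≠ ⊤)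
    (h : ∀ b' < b, L a b' ≤ x₀) (hb : b' < b) : L a b' < x₀ := by
  obtain ⟨b'', hb', hb''⟩ := exists_between hb
  exact (hc.strictMono hL ha hb').trans_le (h b'' hb'')

end IsCancellative

namespace IsDDF

variable {f : ℝ≥0∞ → ℝ≥0∞} {a x : ℝ≥0∞}

theorem monotone (hf : IsDDF f) : Monotone f := hf.1

theorem le_one (hf : IsDDF f) (x : ℝ≥0∞) : f x ≤ 1 := hf.2.1 x

theorem exists_lt_of_lt (hf : IsDDF f) (hx : x ≠ ⊤) (h : a < f x) : ∃ y < x, a < f y := by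
  rcases eq_zero_or_pos x with rfl | hx0
  · rw [hf.2.2.1] at h
    exact absurd h ENNReal.not_lt_zero
  · rw [hf.2.2.2.2 x hx0 (lt_top_iff_ne_top.2 hx)] at h
    exact lt_biSup_iff.1 h

end IsDDF

section OneSidedLimits

variable {h : ℝ≥0∞ → ℝ≥0∞} {c x : ℝ≥0∞}

theorem ContinuousAt.exists_lt_of_lt (hh : ContinuousAt h x) (hx : x ≠ 0) (hc : c < h x) :
    ∃ y < x, c < h y := by
  have : (𝓝[<] x).NeBot := nhdsLT_neBot_of_exists_lt ⟨0, pos_iff_ne_zero.2 hx⟩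
  have hlim : Tendsto h (𝓝[<] x) (𝓝 (h x)) := hh.mono_left nhdsWithin_le_nhds
  obtain ⟨y, hcy, hy⟩ := ((hlim.eventually_const_lt hc).and self_mem_nhdsWithin).exists
  exact ⟨y, hy, hcy⟩

theorem ContinuousAt.apply_le_of_forall_lt (hh : ContinuousAt h x) (hx : x ≠ 0)
    (hc : ∀ y < x, h y ≤ c) : h x ≤ c :=
  le_of_forall_lt fun _ hb => by
    obtain ⟨y, hy, hby⟩ := hh.exists_lt_of_lt hx hb
    exact hby.trans_le (hc y hy)

theorem ContinuousAt.le_apply_of_forall_gt (hh : ContinuousAt h x) (hx : x ≠ ⊤)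
    (hc : ∀ y > x, c ≤ h y) : c ≤ h x := by
  have : (𝓝[>] x).NeBot := nhdsGT_neBot_of_exists_gt ⟨⊤, lt_top_iff_ne_top.2 hx⟩
  have hlim : Tendsto h (𝓝[>] x) (𝓝 (h x)) := hh.mono_left nhdsWithin_le_nhds
  exact ge_of_tendsto hlim (eventually_nhdsWithin_of_forall hc)

end OneSidedLimits

section Tensor

variable {L T : ℝ≥0∞ → ℝ≥0∞ → ℝ≥0∞} {f g : ℝ≥0∞ → ℝ≥0∞} {a c r s t x x₀ P : ℝ≥0∞}

theorem tensor_top : tensor L T f g ⊤ = 1 := if_pos rfl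

theorem tensor_of_ne_top (hx : x ≠ ⊤) :
    tensor L T f g x = ⨆ r, ⨆ s, ⨆ _ : L r s < x, T (f r) (g s) := if_neg hx

theorem le_tensor (hx : x ≠ ⊤) (h : L r s < x) : T (f r) (g s) ≤ tensor L T f g x := by
  rw [tensor_of_ne_top hx]
  exact le_iSup_of_le r (le_iSup_of_le s (le_iSup_of_le h le_rfl))

theorem tensor_le (hx : x ≠ ⊤) (h : ∀ r s, L r s < x → T (f r) (g s) ≤ c) :
    tensor L T f g x ≤ c := by
  rw [tensor_of_ne_top hx]
  exact iSup_le fun r => iSup_le fun s => iSup_le (h r s)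

theorem exists_of_lt_tensor (hx : x ≠ ⊤) (h : a < tensor L T f g x) :
    ∃ r s, L r s < x ∧ a < T (f r) (g s) := by
  simpa only [tensor_of_ne_top hx, lt_iSup_iff, exists_prop] using h

theorem exists_lt_lt_tensor (hx : x ≠ ⊤) (h : a < tensor L T f g x) :
    ∃ y < x, a < tensor L T f g y := by
  obtain ⟨r, s, hrs, ha⟩ := exists_of_lt_tensor hx h
  obtain ⟨y, hy, hyx⟩ := exists_between hrs
  exact ⟨y, hyx, ha.trans_le (le_tensor (hyx.trans_le le_top).ne hy)⟩

theorem tensor_le_one (hT : IsLeftContTNorm T) (hf1 : ∀ r, f r ≤ 1) (hg1 : ∀ s, g s ≤ 1)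
    (x : ℝ≥0∞) : tensor L T f g x ≤ 1 := by
  rcases eq_or_ne x ⊤ with rfl | hx
  · exact tensor_top.le
  · exact tensor_le hx fun r s _ => hT.le_one (hf1 r) (hg1 s)

theorem monotone_tensor (hT : IsLeftContTNorm T) (hf1 : ∀ r, f r ≤ 1) (hg1 : ∀ s, g s ≤ 1) :
    Monotone (tensor L T f g) := by
  intro x y hxy
  rcases eq_or_ne y ⊤ with rfl | hy
  · exact tensor_top (L := L) (T := T) ▸ tensor_le_one hT hf1 hg1 x
  · exact tensor_le (ne_top_of_le_ne_top hy hxy) fun r s hrs => le_tensor hy (hrs.trans_le hxy)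

theorem isDDF_tensor (hT : IsLeftContTNorm T) (hf1 : ∀ r, f r ≤ 1) (hg1 : ∀ s, g s ≤ 1) :
    IsDDF (tensor L T f g) := by
  refine ⟨monotone_tensor hT hf1 hg1, tensor_le_one hT hf1 hg1, ?_, tensor_top, ?_⟩
  · exact le_zero_iff.1 (tensor_le zero_ne_top fun r s h => absurd h ENNReal.not_lt_zero)
  · intro x _ hx
    refine le_antisymm (le_of_forall_lt fun a ha => lt_biSup_iff.2 ?_)
      (iSup₂_le fun y hy => monotone_tensor hT hf1 hg1 hy.le)
    exact exists_lt_lt_tensor hx.ne ha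

theorem T_le_tensor_of_forall_exists (hT : IsLeftContTNorm T) (hf1 : ∀ r, f r ≤ 1)
    (hg : IsDDF g) (hP : P ≤ 1) (hs : s ≠ ⊤) (hx₀ : x₀ ≠ ⊤)
    (h : ∀ s' < s, ∃ r, P ≤ f r ∧ L r s' < x₀) : T P (g s) ≤ tensor L T f g x₀ := by
  refine le_of_forall_lt fun a ha => ?_
  obtain ⟨q, hq, haq⟩ := hT.exists_lt_right hP (hg.le_one s) ha
  obtain ⟨s', hs', hqs'⟩ := hg.exists_lt_of_lt hs hq
  obtain ⟨r, hPr, hrs'⟩ := h s' hs'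
  calc a < T P q := haq
    _ ≤ T (f r) (g s') := hT.mono (hf1 r) (hg.le_one s') hPr hqs'.le
    _ ≤ tensor L T f g x₀ := le_tensor hx₀ hrs'

theorem TNormContinuous.tendsto {ι : Type*} {l : Filter ι} (hTc : TNormContinuous T)
    {u v : ι → ℝ≥0∞} {p q : ℝ≥0∞} (hu : Tendsto u l (𝓝 p)) (hv : Tendsto v l (𝓝 q))
    (hu1 : ∀ i, u i ≤ 1) (hv1 : ∀ i, v i ≤ 1) (hp : p ≤ 1) (hq : q ≤ 1) :
    Tendsto (fun i => T (u i) (v i)) l (𝓝 (T p q)) :=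
  (hTc (p, q) ⟨⟨zero_le, hp⟩, ⟨zero_le, hq⟩⟩).tendsto.comp <| tendsto_nhdsWithin_iff.2
    ⟨hu.prodMk_nhds hv, Eventually.of_forall fun i => ⟨⟨zero_le, hu1 i⟩, ⟨zero_le, hv1 i⟩⟩⟩

/-- `(r, s)` is a limit of pairs admissible for `x ↓ x₀`, approached from the right in `r`
(left disjunct) or from the left (right disjunct). -/
theorem exists_limit_of_forall_lt_tensor (hTc : TNormContinuous T) (hL : IsRightContLOp L)
    (hfm : Monotone f) (hf1 : ∀ r, f r ≤ 1) (hg1 : ∀ s, g s ≤ 1) (hgc : Continuous g)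
    (hx₀ : x₀ ≠ ⊤) (ht : ∀ x > x₀, t < tensor L T f g x) :
    ∃ r s P, r ≤ x₀ ∧ s ≤ x₀ ∧ P ≤ 1 ∧ t ≤ T P (g s) ∧
      ((∀ u > r, P ≤ f u) ∧ (∀ b < s, L r b ≤ x₀) ∨
        P ≤ f r ∧ ∀ a < r, ∀ b < s, L a b ≤ x₀) := by
  have hpair : ∀ x ∈ Ioo x₀ ⊤, ∃ r s, L r s < x ∧ t < T (f r) (g s) :=
    fun x hx => exists_of_lt_tensor hx.2.ne (ht x hx.1)
  choose! ρ σ hρσ using hpair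
  have : (𝓝[>] x₀).NeBot := nhdsGT_neBot_of_exists_gt ⟨⊤, lt_top_iff_ne_top.2 hx₀⟩
  set 𝓤 := Ultrafilter.of (𝓝[>] x₀)
  have h𝓤 : (𝓤 : Filter ℝ≥0∞) ≤ 𝓝 x₀ := (Ultrafilter.of_le _).trans nhdsWithin_le_nhds
  have hgood : ∀ᶠ x in (𝓤 : Filter ℝ≥0∞), L (ρ x) (σ x) < x ∧ t < T (f (ρ x)) (g (σ x)) :=
    Ultrafilter.of_le _ (mem_of_superset (Ioo_mem_nhdsGT (lt_top_iff_ne_top.2 hx₀)) hρσ)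
  have hρ : Tendsto ρ 𝓤 (𝓝 (𝓤.map ρ).lim) := Ultrafilter.le_nhds_lim _
  have hσ : Tendsto σ 𝓤 (𝓝 (𝓤.map σ).lim) := Ultrafilter.le_nhds_lim _
  have hfρ : Tendsto (f ∘ ρ) 𝓤 (𝓝 (𝓤.map (f ∘ ρ)).lim) := Ultrafilter.le_nhds_lim _
  set r := (𝓤.map ρ).lim
  set s := (𝓤.map σ).lim
  set P := (𝓤.map (f ∘ ρ)).lim
  have hLle : ∀ a b, (∀ᶠ x in (𝓤 : Filter ℝ≥0∞), a ≤ ρ x ∧ b ≤ σ x) → L a b ≤ x₀ :=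
    fun a b => hL.le_of_eventually h𝓤 (hgood.mono fun _ hx => hx.1)
  have hr : r ≤ x₀ := le_of_forall_lt_imp_le_of_dense fun a ha => by
    simpa only [hL.zero_right] using
      hLle a 0 ((hρ.eventually_const_le ha).mono fun _ hx => ⟨hx, zero_le⟩)
  have hs : s ≤ x₀ := le_of_forall_lt_imp_le_of_dense fun b hb => by
    simpa only [hL.zero_left] using
      hLle 0 b ((hσ.eventually_const_le hb).mono fun _ hx => ⟨zero_le, hx⟩)
  have hP : P ≤ 1 := le_of_tendsto' hfρ fun x => hf1 (ρ x)
  have htP : t ≤ T P (g s) :=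
    ge_of_tendsto (hTc.tendsto hfρ ((hgc.tendsto s).comp hσ) (fun x => hf1 (ρ x))
      (fun x => hg1 (σ x)) hP (hg1 s)) (hgood.mono fun _ hx => hx.2.le)
  refine ⟨r, s, P, hr, hs, hP, htP, ?_⟩
  rcases Ultrafilter.eventually_or.1 (Eventually.of_forall fun x => le_or_gt r (ρ x)) with
    hright | hleft
  · refine .inl ⟨fun u hu => ?_, fun b hb => hLle r b (hright.and (hσ.eventually_const_le hb))⟩
    exact le_of_tendsto hfρ ((hρ.eventually (Iio_mem_nhds hu)).mono fun _ hx => hfm hx.le)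
  · refine .inr ⟨le_of_tendsto hfρ (hleft.mono fun _ hx => hfm hx.le), fun a ha b hb => ?_⟩
    exact hLle a b ((hρ.eventually_const_le ha).and (hσ.eventually_const_le hb))

theorem le_tensor_of_forall_lt_tensor (hT : IsLeftContTNorm T) (hTc : TNormContinuous T)
    (hL : IsRightContLOp L) (hc : IsCancellative L) (hf : IsDDF f) (hg : IsDDF g)
    (hgc : Continuous g) (hx₀ : x₀ ≠ ⊤) (ht : ∀ x > x₀, t < tensor L T f g x) :
    t ≤ tensor L T f g x₀ := by
  obtain ⟨r, s, P, hr, hs, hP, htP, hlim⟩ :=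
    exists_limit_of_forall_lt_tensor hTc hL hf.monotone hf.le_one hg.le_one hgc hx₀ ht
  have hr' : r ≠ ⊤ := ne_top_of_le_ne_top hx₀ hr
  have hs' : s ≠ ⊤ := ne_top_of_le_ne_top hx₀ hs
  refine htP.trans ?_
  rcases hlim with ⟨hPf, hLr⟩ | ⟨hPf, hLr⟩
  · refine T_le_tensor_of_forall_exists hT hf.le_one hg hP hs' hx₀ fun b hb => ?_
    obtain ⟨u, hu, hLu⟩ := hL.exists_gt_left hr' (hc.lt_of_forall_lt_le hL hr' hLr hb)
    exact ⟨u, hPf u hu, hLu⟩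
  · refine (hT.mono_left (hg.le_one s) (hf.le_one r) hPf).trans (le_of_forall_lt fun a ha => ?_)
    obtain ⟨p, hp, hap⟩ := hT.exists_lt_left (hf.le_one r) (hg.le_one s) ha
    obtain ⟨r', hr'r, hpr'⟩ := hf.exists_lt_of_lt hr' hp
    have hr'' : r' ≠ ⊤ := ne_top_of_lt hr'r
    refine hap.trans_le ((hT.mono_left (hg.le_one s) (hf.le_one r') hpr'.le).trans ?_)
    exact T_le_tensor_of_forall_exists hT hf.le_one hg (hf.le_one r') hs' hx₀ fun b hb =>
      ⟨r', le_rfl, hc.lt_of_forall_lt_le hL hr'' (hLr r' hr'r) hb⟩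

theorem exists_lt_tensor_of_lt_one (hT : IsLeftContTNorm T) (hL : IsRightContLOp L)
    (hc : IsCancellative L) (hf1 : ∀ r, f r ≤ 1) (hfn : NonDefective f) (hg : IsDDF g)
    (hgc : Continuous g) (ha : a < 1) : ∃ x < ⊤, a < tensor L T f g x := by
  obtain ⟨p, hp, hap⟩ := hT.exists_lt_left le_rfl le_rfl (ha.trans_eq (hT.one_right le_rfl).symm)
  obtain ⟨q, hq, hapq⟩ := hT.exists_lt_right hp.le le_rfl hap
  obtain ⟨r, hr, hpr⟩ := lt_biSup_iff.1 (hp.trans_eq hfn.symm)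
  obtain ⟨s, hs, hqs⟩ := hgc.continuousAt.exists_lt_of_lt top_ne_zero (hq.trans_eq hg.2.2.2.1.symm)
  have hrs := hc.lt_top hL (ne_top_of_lt hr) (ne_top_of_lt hs)
  refine ⟨L r s + 1, add_lt_top.2 ⟨hrs, one_lt_top⟩, hapq.trans_le ?_⟩
  exact (hT.mono (hf1 r) (hg.le_one s) hpr.le hqs.le).trans
    (le_tensor (add_lt_top.2 ⟨hrs, one_lt_top⟩).ne (ENNReal.lt_add_right hrs.ne one_ne_zero))

theorem continuous_tensor (hT : IsLeftContTNorm T) (hTc : TNormContinuous T)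
    (hL : IsRightContLOp L) (hc : IsCancellative L) (hf : IsDDF f) (hfn : NonDefective f)
    (hg : IsDDF g) (hgc : Continuous g) : Continuous (tensor L T f g) := by
  have hmono := monotone_tensor (L := L) hT hf.le_one hg.le_one
  refine continuous_iff_continuousAt.2 fun x₀ => tendsto_order.2 ⟨fun a ha => ?_, fun b hb => ?_⟩
  · obtain ⟨x, hx, hax⟩ : ∃ x < x₀, a < tensor L T f g x := by
      rcases eq_or_ne x₀ ⊤ with rfl | hx₀
      · exact exists_lt_tensor_of_lt_one hT hL hc hf.le_one hfn hg hgc (ha.trans_eq tensor_top)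
      · exact exists_lt_lt_tensor hx₀ ha
    filter_upwards [Ioi_mem_nhds hx] with y hy using hax.trans_le (hmono hy.le)
  · rcases eq_or_ne x₀ ⊤ with rfl | hx₀
    · exact Eventually.of_forall fun y =>
        (tensor_le_one hT hf.le_one hg.le_one y).trans_lt (tensor_top (L := L) ▸ hb)
    obtain ⟨c, hc₁, hcb⟩ := exists_between hb
    obtain ⟨x, hx, hxc⟩ : ∃ x > x₀, tensor L T f g x ≤ c := by
      by_contra! h
      exact hc₁.not_ge (le_tensor_of_forall_lt_tensor hT hTc hL hc hf hg hgc hx₀ h)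
    filter_upwards [Iio_mem_nhds hx] with y hy using (hmono hy.le).trans_lt (hxc.trans_lt hcb)

end Tensor

section StepDDF

variable {a b p r : ℝ≥0∞}

noncomputable def twoStep (a b p : ℝ≥0∞) : ℝ≥0∞ → ℝ≥0∞ :=
  fun r => if r ≤ a then 0 else if r ≤ b then p else 1

theorem twoStep_of_le (h : r ≤ a) : twoStep a b p r = 0 := if_pos h

theorem twoStep_of_mem_Ioc (h : r ∈ Ioc a b) : twoStep a b p r = p :=
  (if_neg (not_le.2 h.1)).trans (if_pos h.2)

theorem twoStep_of_lt (ha : a < r) (hb : b < r) : twoStep a b p r = 1 :=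
  (if_neg (not_le.2 ha)).trans (if_neg (not_le.2 hb))

theorem twoStep_le_one (hp : p ≤ 1) (r : ℝ≥0∞) : twoStep a b p r ≤ 1 := by
  unfold twoStep
  split_ifs <;> simp [hp]

theorem monotone_twoStep (hp : p ≤ 1) : Monotone (twoStep a b p) := by
  intro r r' hrr'
  unfold twoStep
  split_ifs <;> first | exact le_rfl | exact zero_le | exact hp | order

theorem isDDF_twoStep (hp : p ≤ 1) (ha : a ≠ ⊤) (hb : b ≠ ⊤) : IsDDF (twoStep a b p) := by
  refine ⟨monotone_twoStep hp, twoStep_le_one hp, twoStep_of_le zero_le,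
    twoStep_of_lt (lt_top_iff_ne_top.2 ha) (lt_top_iff_ne_top.2 hb), fun x hx0 _ => ?_⟩
  refine le_antisymm ?_ (iSup₂_le fun y hy => monotone_twoStep hp hy.le)
  obtain ⟨y, hyx, hxy⟩ : ∃ y < x, twoStep a b p x ≤ twoStep a b p y := by
    by_cases hxa : x ≤ a
    · exact ⟨0, hx0, (twoStep_of_le hxa).trans_le zero_le⟩
    by_cases hxb : x ≤ b
    · obtain ⟨y, hay, hyx⟩ := exists_between (not_le.1 hxa)
      refine ⟨y, hyx, ?_⟩
      rw [twoStep_of_mem_Ioc ⟨not_le.1 hxa, hxb⟩, twoStep_of_mem_Ioc ⟨hay, hyx.le.trans hxb⟩]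
    · obtain ⟨y, hy, hyx⟩ := exists_between (max_lt (not_le.1 hxa) (not_le.1 hxb))
      refine ⟨y, hyx, ?_⟩
      rw [twoStep_of_lt (not_le.1 hxa) (not_le.1 hxb),
        twoStep_of_lt ((le_max_left a b).trans_lt hy) ((le_max_right a b).trans_lt hy)]
  exact le_iSup₂_of_le y hyx hxy

theorem nonDefective_twoStep (hp : p ≤ 1) (ha : a ≠ ⊤) (hb : b ≠ ⊤) :
    NonDefective (twoStep a b p) := by
  have hm : max a b ≠ ⊤ := max_ne_top ha hb
  have hlt : max a b < max a b + 1 := ENNReal.lt_add_right hm one_ne_zero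
  refine le_antisymm (iSup₂_le fun r _ => twoStep_le_one hp r) (le_iSup₂_of_le (max a b + 1)
    (add_lt_top.2 ⟨lt_top_iff_ne_top.2 hm, one_lt_top⟩) ?_)
  rw [twoStep_of_lt ((le_max_left a b).trans_lt hlt) ((le_max_right a b).trans_lt hlt)]

end StepDDF

section OneSubInv

noncomputable def oneSubInv (s : ℝ≥0∞) : ℝ≥0∞ := 1 - (1 + s)⁻¹

theorem continuous_oneSubInv : Continuous oneSubInv :=
  (ENNReal.continuous_sub_left one_ne_top).comp (continuous_inv.comp (continuous_const_add 1))

theorem strictMono_oneSubInv : StrictMono oneSubInv := by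
  intro s s' hss
  have h1 : (1 + s')⁻¹ < (1 + s)⁻¹ :=
    ENNReal.inv_lt_inv.2 (ENNReal.add_lt_add_left one_ne_top hss)
  have h2 : (1 + s)⁻¹ ≤ 1 := ENNReal.inv_le_one.2 le_self_add
  exact ((ENNReal.cancel_of_ne one_ne_top).tsub_lt_tsub_iff_left_of_le
    (ENNReal.cancel_of_ne (ne_top_of_le_ne_top one_ne_top h2)) h2).2 h1

theorem oneSubInv_le_one (s : ℝ≥0∞) : oneSubInv s ≤ 1 := tsub_le_self

theorem oneSubInv_top : oneSubInv ⊤ = 1 := by simp [oneSubInv]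

theorem oneSubInv_lt_one {s : ℝ≥0∞} (hs : s ≠ ⊤) : oneSubInv s < 1 :=
  strictMono_oneSubInv.lt_iff_lt.2 (lt_top_iff_ne_top.2 hs) |>.trans_eq oneSubInv_top

theorem isDDF_oneSubInv : IsDDF oneSubInv := by
  refine ⟨strictMono_oneSubInv.monotone, oneSubInv_le_one, by simp [oneSubInv], oneSubInv_top,
    fun x hx0 _ => le_antisymm (le_of_forall_lt fun c hc => lt_biSup_iff.2 ?_)
      (iSup₂_le fun y hy => strictMono_oneSubInv.monotone hy.le)⟩
  exact continuous_oneSubInv.continuousAt.exists_lt_of_lt hx0.ne' hc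

theorem exists_oneSubInv_eq {q : ℝ≥0∞} (hq : q < 1) : ∃ σ ≠ ⊤, oneSubInv σ = q := by
  obtain ⟨σ, hσ⟩ := intermediate_value_univ 0 ⊤ continuous_oneSubInv
    ⟨by simp [oneSubInv], oneSubInv_top ▸ hq.le⟩
  exact ⟨σ, by rintro rfl; exact hq.ne (hσ.symm.trans oneSubInv_top), hσ⟩

end OneSubInv

section Necessity

variable {L T : ℝ≥0∞ → ℝ≥0∞ → ℝ≥0∞}

theorem not_continuous_tensor_of_L_eq (hT : IsLeftContTNorm T) (hL : IsRightContLOp L)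
    {a y z : ℝ≥0∞} (ha : a ≠ ⊤) (hyz : y < z) (heq : L a y = L a z) :
    ¬ Continuous (tensor L T (twoStep a a 0) oneSubInv) := by
  intro hcont
  have hup : ∀ w ≠ ⊤, w ≤ L a y → tensor L T (twoStep a a 0) oneSubInv w ≤ oneSubInv y := by
    refine fun w hw hwy => tensor_le hw fun r s hrs => ?_
    rcases le_or_gt r a with hra | hra
    · rw [twoStep_of_le hra, hT.zero_left (oneSubInv_le_one s)]
      exact zero_le
    · rw [twoStep_of_lt hra hra, hT.one_left (oneSubInv_le_one s)]
      refine strictMono_oneSubInv.monotone (le_of_not_gt fun hys => ?_)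
      exact (hrs.trans_le hwy).not_ge (hL.mono hra.le hys.le)
  rcases eq_or_ne (L a y) ⊤ with htop | hfin
  · have h := hcont.continuousAt.apply_le_of_forall_lt top_ne_zero fun w hw =>
      hup w hw.ne (htop ▸ le_top)
    exact (oneSubInv_lt_one (hyz.trans_le le_top).ne).not_ge (tensor_top ▸ h)
  · have h := hcont.continuousAt.le_apply_of_forall_gt (c := oneSubInv z) hfin fun x hx => by
      rcases eq_or_ne x ⊤ with rfl | hxt
      · exact tensor_top (L := L) (T := T) ▸ oneSubInv_le_one z
      obtain ⟨u, hu, hLu⟩ := hL.exists_gt_left ha (heq ▸ hx)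
      simpa only [twoStep_of_lt hu hu, hT.one_left (oneSubInv_le_one z)] using
        le_tensor (T := T) (f := twoStep a a 0) (g := oneSubInv) hxt hLu
    exact (strictMono_oneSubInv hyz).not_ge (h.trans (hup _ hfin le_rfl))

theorem isCancellative_of_continuous_tensor (hT : IsLeftContTNorm T) (hL : IsRightContLOp L)
    (H : ∀ f g, IsDDF f → NonDefective f → IsDDF g → Continuous g →
      Continuous (tensor L T f g)) : IsCancellative L := by
  intro a y z heq
  by_contra! hne
  have hcont := H _ _ (isDDF_twoStep zero_le hne.1 hne.1)
    (nonDefective_twoStep zero_le hne.1 hne.1) isDDF_oneSubInv continuous_oneSubInv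
  rcases hne.2.lt_or_gt with hyz | hzy
  · exact not_continuous_tensor_of_L_eq hT hL hne.1 hyz heq hcont
  · exact not_continuous_tensor_of_L_eq hT hL hne.1 hzy heq.symm hcont

theorem exists_gt_T_lt_of_continuous_tensor (hT : IsLeftContTNorm T) (hL : IsRightContLOp L)
    (H : ∀ f g, IsDDF f → NonDefective f → IsDDF g → Continuous g →
      Continuous (tensor L T f g))
    {p q b : ℝ≥0∞} (hp : p ≤ 1) (hq : q < 1) (hb : T p q < b) : ∃ q' ∈ Ioc q 1, T p q' < b := by
  obtain ⟨σ, hσ, rfl⟩ := exists_oneSubInv_eq hq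
  have hM : σ + 1 ≠ ⊤ := add_ne_top.2 ⟨hσ, one_ne_top⟩
  have hcont := H (twoStep 0 (σ + 1) p) oneSubInv (isDDF_twoStep hp zero_ne_top hM)
    (nonDefective_twoStep hp zero_ne_top hM) isDDF_oneSubInv continuous_oneSubInv
  by_contra! hge
  have hup : tensor L T (twoStep 0 (σ + 1) p) oneSubInv σ ≤ T p (oneSubInv σ) := by
    refine tensor_le hσ fun r s hrs => ?_
    rcases eq_zero_or_pos r with rfl | hr0
    · rw [twoStep_of_le le_rfl, hT.zero_left (oneSubInv_le_one s)]
      exact zero_le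
    have hrσ : r ≤ σ + 1 := ((hL.le_left r s).trans hrs.le).trans le_self_add
    have hsσ : s ≤ σ := (hL.le_right r s).trans hrs.le
    rw [twoStep_of_mem_Ioc ⟨hr0, hrσ⟩]
    exact hT.mono_right hp (oneSubInv_le_one σ) (strictMono_oneSubInv.monotone hsσ)
  have hlow : ∀ x > σ, b ≤ tensor L T (twoStep 0 (σ + 1) p) oneSubInv x := by
    intro x hx
    rcases eq_or_ne x ⊤ with rfl | hxt
    · rw [tensor_top]
      exact (hge 1 ⟨hq, le_rfl⟩).trans (hT.le_one hp le_rfl)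
    obtain ⟨s', hσs', hs'x⟩ := exists_between hx
    obtain ⟨u, hu, hLu⟩ := hL.exists_gt_left zero_ne_top ((hL.zero_left s').trans_lt hs'x)
    have hfu : twoStep 0 (σ + 1) p (min u (σ + 1)) = p :=
      twoStep_of_mem_Ioc ⟨lt_min hu (zero_lt_one.trans_le le_add_self), min_le_right _ _⟩
    calc b ≤ T p (oneSubInv s') := hge _ ⟨strictMono_oneSubInv hσs', oneSubInv_le_one s'⟩
      _ = T (twoStep 0 (σ + 1) p (min u (σ + 1))) (oneSubInv s') := by rw [hfu]
      _ ≤ tensor L T (twoStep 0 (σ + 1) p) oneSubInv x :=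
        le_tensor hxt ((hL.mono_left s' (min_le_left _ _)).trans_lt hLu)
  exact hb.not_ge ((hcont.continuousAt.le_apply_of_forall_gt hσ hlow).trans hup)

end Necessity

section JointContinuity

variable {T : ℝ≥0∞ → ℝ≥0∞ → ℝ≥0∞} {p q b : ℝ≥0∞}

theorem exists_eventually_le_and_T_lt
    (hright : ∀ p q b, p ≤ 1 → q < 1 → T p q < b → ∃ q' ∈ Ioc q 1, T p q' < b)
    (hp : p ≤ 1) (hq : q ≤ 1) (hb : T p q < b) :
    ∃ q' ≤ 1, (∀ᶠ y in 𝓝[I01] q, y ≤ q') ∧ T p q' < b := by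
  rcases hq.lt_or_eq with hq1 | rfl
  · obtain ⟨q', ⟨hqq', hq'1⟩, hq'b⟩ := hright p q b hp hq1 hb
    exact ⟨q', hq'1, eventually_nhdsWithin_of_eventually_nhds
      ((eventually_lt_nhds hqq').mono fun _ hy => hy.le), hq'b⟩
  · exact ⟨1, le_rfl, eventually_nhdsWithin_of_forall fun _ hy => hy.2, hb⟩

theorem IsLeftContTNorm.tNormContinuous (hT : IsLeftContTNorm T)
    (hright : ∀ p q b, p ≤ 1 → q < 1 → T p q < b → ∃ q' ∈ Ioc q 1, T p q' < b) :
    TNormContinuous T := by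
  rintro ⟨p, q⟩ ⟨hp, hq⟩
  rw [ContinuousWithinAt, nhdsWithin_prod_eq]
  have hbox : ∀ᶠ x in 𝓝[I01] p ×ˢ 𝓝[I01] q, x ∈ I01 ×ˢ I01 :=
    prod_mem_prod self_mem_nhdsWithin self_mem_nhdsWithin
  refine tendsto_order.2 ⟨fun a ha => ?_, fun b hb => ?_⟩
  · obtain ⟨p', hp', ha'⟩ := hT.exists_lt_left hp.2 hq.2 ha
    obtain ⟨q', hq', ha''⟩ := hT.exists_lt_right (hp'.le.trans hp.2) hq.2 ha'
    have hev : ∀ᶠ x in 𝓝[I01] p ×ˢ 𝓝[I01] q, p' < x.1 ∧ q' < x.2 :=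
      (eventually_nhdsWithin_of_eventually_nhds (Ioi_mem_nhds hp')).prod_mk
        (eventually_nhdsWithin_of_eventually_nhds (Ioi_mem_nhds hq'))
    filter_upwards [hev, hbox] with x hx hx01
    exact ha''.trans_le (hT.mono hx01.1.2 hx01.2.2 hx.1.le hx.2.le)
  · obtain ⟨p', hp'1, hevp, hb'⟩ :=
      exists_eventually_le_and_T_lt hright hq.2 hp.2 (hT.comm hq.2 hp.2 ▸ hb)
    rw [hT.comm hq.2 hp'1] at hb'
    obtain ⟨q', hq'1, hevq, hb''⟩ := exists_eventually_le_and_T_lt hright hp'1 hq.2 hb'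
    filter_upwards [hevp.prod_mk hevq] with x hx
    exact (hT.mono hp'1 hq'1 hx.1 hx.2).trans_lt hb''

end JointContinuity

theorem tensor_nondef_cont_iff_cancellation (T L : ℝ≥0∞ → ℝ≥0∞ → ℝ≥0∞)
    (hT : IsLeftContTNorm T) (hL : IsRightContLOp L) :
    (∀ f g : ℝ≥0∞ → ℝ≥0∞, IsDDF f → NonDefective f → IsDDF g → Continuous g →
      IsDDF (tensor L T f g) ∧ Continuous (tensor L T f g)) ↔
    (TNormContinuous T ∧
      ∀ x y z : ℝ≥0∞, L x y = L x z → x = ⊤ ∨ y = z) := by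
  constructor
  · intro H
    have Hc : ∀ f g, IsDDF f → NonDefective f → IsDDF g → Continuous g →
        Continuous (tensor L T f g) := fun f g hf hfn hg hgc => (H f g hf hfn hg hgc).2
    exact ⟨hT.tNormContinuous fun p q b hp hq hb =>
        exists_gt_T_lt_of_continuous_tensor hT hL Hc hp hq hb,
      isCancellative_of_continuous_tensor hT hL Hc⟩
  · rintro ⟨hTc, hc⟩ f g hf hfn hg hgc
    exact ⟨isDDF_tensor hT hf.le_one hg.le_one, continuous_tensor hT hTc hL hc hf hfn hg hgc⟩
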